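/- If Γ is a nonempty collection of maximum independent sets of G, then 2α(G) ≤ |⋃Γ| + |⋂Γ|. -/

import Mathlib

open Set

variable {V : Type*}

/-- `S` is an independent set of `G`. -/
def IndepSet (G : SimpleGraph V) (S : Set V) : Prop :=
  ∀ x ∈ S, ∀ y ∈ S, ¬ G.Adj x y

/-- The independence number `α(G)`. -/
noncomputable def alpha (G : SimpleGraph V) : ℕ :=
  sSup {n | ∃ S : Set V, IndepSet G S ∧ S.ncard = n}

/-- `S` is a maximum independent set of `G`. -/
def MaxIndep (G : SimpleGraph V) (S : Set V) : Prop :=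
  IndepSet G S ∧ S.ncard = alpha G

/-- `Ω(G)`, the family of all maximum independent sets. -/
def Omega (G : SimpleGraph V) : Set (Set V) := {S | MaxIndep G S}

/-- `core(G)`, the intersection of all maximum independent sets. -/
def core (G : SimpleGraph V) : Set V := ⋂₀ Omega G

/-- `corona(G)`, the union of all maximum independent sets. -/
def corona (G : SimpleGraph V) : Set V := ⋃₀ Omega G

/-- The matching number `μ(G)`. -/
noncomputable def matchNum (G : SimpleGraph V) : ℕ :=
  sSup {n | ∃ M : G.Subgraph, M.IsMatching ∧ M.edgeSet.ncard = n}

/-- A matching from `X` into `Y`: an injection `f` on `X` into `Y` such that each `x ∈ X`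
is adjacent to `f x` and the edges `{x, f x}` are pairwise disjoint. -/
def MatchingFrom (G : SimpleGraph V) (X Y : Set V) : Prop :=
  ∃ f : V → V, Set.InjOn f X ∧ (∀ x ∈ X, f x ∈ Y ∧ G.Adj x (f x)) ∧
    ∀ x ∈ X, ∀ y ∈ X, x ≠ y → f x ≠ y

/-!
Induct on the (finite) family `Γ`. Adding a maximum independent set `S` to a family with union
`U` and intersection `A` raises `|U|` by `|S \ U|` and lowers `|A|` by `|A \ S|`, so it suffices
that `|A \ S| ≤ |S \ U|`. No vertex of `A` has a neighbour in `U`, so the neighbours of `A \ S`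
inside `S` all lie in `S \ U`; exchanging them for `A \ S` gives an independent set, which by
maximality of `S` is no larger than `S`.
-/

lemma IndepSet.mono {G : SimpleGraph V} {S T : Set V} (hT : IndepSet G T) (hST : S ⊆ T) :
    IndepSet G S :=
  fun x hx y hy => hT x (hST hx) y (hST hy)

lemma IndepSet.ncard_le_alpha [Finite V] {G : SimpleGraph V} {S : Set V} (hS : IndepSet G S) :
    S.ncard ≤ alpha G :=
  le_csSup ⟨Nat.card V, by rintro n ⟨T, -, rfl⟩; exact ncard_le_card T⟩ ⟨S, hS, rfl⟩

lemma indepSet_sInter {G : SimpleGraph V} {Γ : Set (Set V)} (hΓ : ∀ T ∈ Γ, IndepSet G T)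
    (hne : Γ.Nonempty) : IndepSet G (⋂₀ Γ) :=
  let ⟨T, hT⟩ := hne
  (hΓ T hT).mono (sInter_subset_of_mem hT)

lemma not_adj_of_mem_sInter_of_mem_sUnion {G : SimpleGraph V} {Γ : Set (Set V)}
    (hΓ : ∀ T ∈ Γ, IndepSet G T) {x y : V} (hx : x ∈ ⋂₀ Γ) (hy : y ∈ ⋃₀ Γ) : ¬ G.Adj x y := by
  obtain ⟨T, hT, hyT⟩ := hy
  exact hΓ T hT x (hx T hT) y hyT

section Exchange

variable [Finite V] {G : SimpleGraph V} {S A U : Set V}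

lemma MaxIndep.ncard_sdiff_le (hS : MaxIndep G S) (hA : IndepSet G A)
    (hAU : ∀ x ∈ A, ∀ y ∈ U, ¬ G.Adj x y) : (A \ S).ncard ≤ (S \ U).ncard := by
  set N : Set V := {y ∈ S | ∃ x ∈ A \ S, G.Adj x y}
  have hNS : N ⊆ S := fun y hy => hy.1
  have hNU : N ⊆ S \ U := fun y ⟨hyS, x, hx, hxy⟩ => ⟨hyS, fun hyU => hAU x hx.1 y hyU hxy⟩
  have hexchange : IndepSet G ((S \ N) ∪ (A \ S)) := by
    rintro x (⟨hxS, hxN⟩ | hx) y (⟨hyS, hyN⟩ | hy) hxy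
    · exact hS.1 x hxS y hyS hxy
    · exact hxN ⟨hxS, y, hy, hxy.symm⟩
    · exact hyN ⟨hyS, x, hx, hxy⟩
    · exact hA x hx.1 y hy.1 hxy
  have hdisj : Disjoint (S \ N) (A \ S) :=
    disjoint_left.2 fun x hx hx' => hx'.2 hx.1
  have hle : (S \ N).ncard + (A \ S).ncard ≤ (S \ N).ncard + N.ncard := by
    rw [← ncard_union_eq hdisj, ncard_sdiff_add_ncard_of_subset hNS, hS.2]
    exact hexchange.ncard_le_alpha
  exact (Nat.le_of_add_le_add_left hle).trans (ncard_le_ncard hNU)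

lemma MaxIndep.ncard_add_ncard_le (hS : MaxIndep G S) (hA : IndepSet G A)
    (hAU : ∀ x ∈ A, ∀ y ∈ U, ¬ G.Adj x y) :
    U.ncard + A.ncard ≤ (S ∪ U).ncard + (S ∩ A).ncard := by
  have hunion : (S \ U).ncard + U.ncard = (S ∪ U).ncard := ncard_sdiff_add_ncard S U
  have hinter : (S ∩ A).ncard + (A \ S).ncard = A.ncard := by
    rw [inter_comm]; exact ncard_inter_add_ncard_sdiff_eq_ncard A S
  have hexchange := hS.ncard_sdiff_le hA hAU
  omega

end Exchange

theorem stmt_6 [Fintype V] (G : SimpleGraph V)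
    (Γ : Set (Set V)) (hΓ : Γ ⊆ Omega G) (hne : Γ.Nonempty) :
    2 * alpha G ≤ (⋃₀ Γ).ncard + (⋂₀ Γ).ncard := by
  induction Γ, toFinite Γ using Finite.induction_on with
  | empty => exact absurd hne not_nonempty_empty
  | @insert S Δ _ _ ih =>
    have hSmax : MaxIndep G S := hΓ (mem_insert S Δ)
    rw [sUnion_insert, sInter_insert]
    rcases Δ.eq_empty_or_nonempty with rfl | hΔne
    · simp [hSmax.2, two_mul]
    have hΔΩ : Δ ⊆ Omega G := (subset_insert S Δ).trans hΓ
    have hΔindep : ∀ T ∈ Δ, IndepSet G T := fun T hT => (hΔΩ hT).1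
    calc 2 * alpha G ≤ (⋃₀ Δ).ncard + (⋂₀ Δ).ncard := ih hΔΩ hΔne
      _ ≤ (S ∪ ⋃₀ Δ).ncard + (S ∩ ⋂₀ Δ).ncard :=
        hSmax.ncard_add_ncard_le (indepSet_sInter hΔindep hΔne)
          fun _ hx _ hy => not_adj_of_mem_sInter_of_mem_sUnion hΔindep hx hy
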